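/- For α > 0 and z = x + iy in the upper half plane, the two-dimensional theta function θ(α; z) = ∑_{(m,n) ∈ ℤ²} exp(-πα((mx+n)² + m²y²)/y) satisfies the modular-type invariances θ(α; z + 1) = θ(α; z) and θ(α; -1/z) = θ(α; z). -/

import Mathlib

/-- Two-dimensional theta function as a function of α > 0 and z in the upper half plane. -/
noncomputable def theta2 (α : ℝ) (z : ℂ) : ℝ :=
  ∑' p : ℤ × ℤ, Real.exp (-Real.pi * α * (((p.1 : ℝ) * z.re + (p.2 : ℝ))^2 + (p.1 : ℝ)^2 * z.im^2) / z.im)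

/-- Reindexing (m,n) ↦ (m, n+m). -/
def theta2ShiftEquiv : ℤ × ℤ ≃ ℤ × ℤ where
  toFun p := (p.1, p.2 + p.1)
  invFun p := (p.1, p.2 - p.1)
  left_inv p := by simp
  right_inv p := by simp

/-- Reindexing (m,n) ↦ (n, -m). -/
def theta2RotEquiv : ℤ × ℤ ≃ ℤ × ℤ where
  toFun p := (p.2, -p.1)
  invFun p := (-p.2, p.1)
  left_inv p := by simp
  right_inv p := by simp

theorem theta2_invariance (α : ℝ) (z : ℂ) (hα : 0 < α) (hz : 0 < z.im) :
    theta2 α (z + 1) = theta2 α z ∧ theta2 α (-1 / z) = theta2 α z := by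
  have hy : z.im ≠ 0 := hz.ne'
  have hN : Complex.normSq z ≠ 0 := by
    intro h
    rw [Complex.normSq_eq_zero] at h
    simp [h] at hz
  constructor
  · unfold theta2
    rw [← theta2ShiftEquiv.tsum_eq
      (fun p : ℤ × ℤ => Real.exp (-Real.pi * α *
        (((p.1 : ℝ) * z.re + (p.2 : ℝ))^2 + (p.1 : ℝ)^2 * z.im^2) / z.im))]
    apply tsum_congr
    intro p
    simp only [theta2ShiftEquiv, Equiv.coe_fn_mk, Complex.add_re, Complex.add_im,
      Complex.one_re, Complex.one_im, add_zero]
    push_cast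
    congr 1
    ring
  · unfold theta2
    rw [← theta2RotEquiv.tsum_eq
      (fun p : ℤ × ℤ => Real.exp (-Real.pi * α *
        (((p.1 : ℝ) * z.re + (p.2 : ℝ))^2 + (p.1 : ℝ)^2 * z.im^2) / z.im))]
    apply tsum_congr
    intro p
    simp only [theta2RotEquiv, Equiv.coe_fn_mk, neg_div, Complex.neg_re, Complex.neg_im,
      Complex.div_re, Complex.div_im, Complex.one_re, Complex.one_im, Complex.normSq_apply]
    push_cast
    congr 1
    have hN' : z.re * z.re + z.im * z.im ≠ 0 := by
      rwa [Complex.normSq_apply] at hN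
    field_simp
    rw [div_eq_iff (by simpa using hy)]
    ring
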